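/- arXiv:2410.15214 — 2 statements merged into one kernel-verified Lean document; each statement's English description precedes it below -/
import Mathlib

section
/- Let V = C/H with H lognormal(0, σ_f²) and C > 0. Then the derivative of the reverse virtual valuation c̃(v) = v + F_V(v)/f_V(v) satisfies c̃'(v) = 2 + ((1 - Φ(γ))/φ(γ))·(σ_f - γ), where γ = ln(C/v)/σ_f, and this derivative is strictly positive for all v > 0. Hence the lognormal-fading reverse Myerson auction is regular. -/
open MeasureTheory ProbabilityTheory Set

/-- The standard normal PDF `φ`. -/
noncomputable def stdNormPDF (x : ℝ) : ℝ := gaussianPDFReal 0 1 x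

/-- The standard normal CDF `Φ`. -/
noncomputable def stdNormCDF (x : ℝ) : ℝ := ∫ t in Iic x, stdNormPDF t

lemma stdNormPDF_eq : stdNormPDF = fun x => (Real.sqrt (2 * Real.pi))⁻¹ * Real.exp (-x ^ 2 / 2) := by
  funext x
  simp only [stdNormPDF, gaussianPDFReal]
  norm_num

lemma stdNormPDF_pos (x : ℝ) : 0 < stdNormPDF x := gaussianPDFReal_pos 0 1 x one_ne_zero

lemma integrable_stdNormPDF : Integrable stdNormPDF := integrable_gaussianPDFReal 0 1

lemma continuous_stdNormPDF : Continuous stdNormPDF := by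
  rw [stdNormPDF_eq]
  fun_prop

lemma integral_stdNormPDF : ∫ x, stdNormPDF x = 1 := integral_gaussianPDFReal_eq_one 0 one_ne_zero

lemma hasDerivAt_stdNormCDF (x : ℝ) : HasDerivAt stdNormCDF (stdNormPDF x) x := by
  have h : stdNormCDF = fun y => stdNormCDF x + ∫ t in x..y, stdNormPDF t := by
    funext y
    rw [← intervalIntegral.integral_Iic_sub_Iic integrable_stdNormPDF.integrableOn
      integrable_stdNormPDF.integrableOn]
    simp [stdNormCDF]
  rw [h]
  exact (intervalIntegral.integral_hasDerivAt_right
    integrable_stdNormPDF.intervalIntegrable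
    (continuous_stdNormPDF.stronglyMeasurable.stronglyMeasurableAtFilter)
    continuous_stdNormPDF.continuousAt).const_add _


lemma one_sub_stdNormCDF (x : ℝ) : 1 - stdNormCDF x = ∫ t in Ioi x, stdNormPDF t := by
  have := intervalIntegral.integral_Iic_add_Ioi (b := x) (f := stdNormPDF) (μ := volume)
    integrable_stdNormPDF.integrableOn integrable_stdNormPDF.integrableOn
  rw [integral_stdNormPDF] at this
  unfold stdNormCDF
  linarith

lemma one_sub_stdNormCDF_pos (x : ℝ) : 0 < 1 - stdNormCDF x := by
  rw [one_sub_stdNormCDF]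
  have h1 : (0:ℝ) < ∫ t in x..(x+1), stdNormPDF t := by
    apply intervalIntegral.intervalIntegral_pos_of_pos_on
      integrable_stdNormPDF.intervalIntegrable (fun t _ => stdNormPDF_pos t)
    linarith
  rw [intervalIntegral.integral_of_le (by linarith : x ≤ x + 1)] at h1
  have h2 : (∫ t in Ioc x (x+1), stdNormPDF t) ≤ ∫ t in Ioi x, stdNormPDF t := by
    apply setIntegral_mono_set integrable_stdNormPDF.integrableOn
      (ae_of_all _ fun t => (stdNormPDF_pos t).le)
    exact HasSubset.Subset.eventuallyLE Ioc_subset_Ioi_self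
  linarith

lemma hasDerivAt_stdNormPDF (x : ℝ) : HasDerivAt stdNormPDF (-x * stdNormPDF x) x := by
  rw [stdNormPDF_eq]
  have h : HasDerivAt (fun y : ℝ => Real.exp (-y ^ 2 / 2)) (-x * Real.exp (-x ^ 2 / 2)) x := by
    have h1 : HasDerivAt (fun y : ℝ => -y ^ 2 / 2) (-x) x := by
      have := ((hasDerivAt_pow 2 x).neg).div_const 2
      exact this.congr_deriv (by norm_num; ring)
    have := h1.exp
    convert this using 1; ring
  have := h.const_mul (Real.sqrt (2 * Real.pi))⁻¹
  exact this.congr_deriv (by ring)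

lemma integrableOn_id_mul_stdNormPDF (x : ℝ) :
    IntegrableOn (fun t => t * stdNormPDF t) (Ioi x) := by
  apply Integrable.integrableOn
  rw [stdNormPDF_eq]
  have := (integrable_mul_exp_neg_mul_sq (b := (1:ℝ)/2) (by norm_num)).const_mul
    (Real.sqrt (2 * Real.pi))⁻¹
  apply this.congr (Filter.Eventually.of_forall ?_)
  intro t; simp only; ring_nf

lemma integral_Ioi_id_mul_stdNormPDF (x : ℝ) :
    ∫ t in Ioi x, t * stdNormPDF t = stdNormPDF x := by
  have := integral_Ioi_of_hasDerivAt_of_tendsto' (a := x) (f := fun t => -stdNormPDF t)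
    (f' := fun t => t * stdNormPDF t) (m := 0)
    (fun t _ => (hasDerivAt_stdNormPDF t).neg.congr_deriv (by ring))
    (integrableOn_id_mul_stdNormPDF x) ?_
  · simpa using this
  · rw [stdNormPDF_eq]
    simp only
    rw [show (0:ℝ) = -((Real.sqrt (2*Real.pi))⁻¹ * 0) by ring]
    apply Filter.Tendsto.neg
    apply Filter.Tendsto.const_mul
    apply Real.tendsto_exp_atBot.comp
    have : Filter.Tendsto (fun y : ℝ => -y ^ 2 / 2) Filter.atTop Filter.atBot := by
      apply Filter.Tendsto.atBot_div_const (by norm_num : (0:ℝ) < 2)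
      simpa using (Filter.tendsto_pow_atTop (two_ne_zero)).neg_atBot (α := ℝ)
    exact this

lemma mills (x : ℝ) (hx : 0 < x) : 1 - stdNormCDF x ≤ stdNormPDF x / x := by
  rw [one_sub_stdNormCDF]
  have h1 : (∫ t in Ioi x, stdNormPDF t) ≤ ∫ t in Ioi x, (t / x) * stdNormPDF t := by
    apply setIntegral_mono_on integrable_stdNormPDF.integrableOn
      (((integrableOn_id_mul_stdNormPDF x).div_const x).congr
        (Filter.Eventually.of_forall fun t => by ring))
    · exact measurableSet_Ioi
    · intro t ht
      have htx : x < t := ht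
      have : (1:ℝ) ≤ t / x := (one_le_div hx).2 htx.le
      nlinarith [stdNormPDF_pos t]
  have h2 : (∫ t in Ioi x, (t / x) * stdNormPDF t) = stdNormPDF x / x := by
    rw [show (fun t => (t / x) * stdNormPDF t) = fun t => x⁻¹ * (t * stdNormPDF t) by
      funext t; ring]
    rw [integral_const_mul, integral_Ioi_id_mul_stdNormPDF]
    ring
  linarith

/-- Let `V = C/H` with `H` lognormal `(0, σ_f²)` and `C > 0`, so that the CDF
and PDF of `V` are `F_V(v) = 1 - Φ(ln(C/v)/σ_f)` and
`f_V(v) = (h(v)/(C σ_f √(2π))) exp(-(ln h(v))²/(2σ_f²))` with `h(v) = C/v`. Then the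
reverse virtual valuation `c̃(v) = v + F_V(v)/f_V(v)` has derivative
`c̃'(v) = 2 + ((1 - Φ(γ))/φ(γ))·(σ_f - γ)` where `γ = ln(C/v)/σ_f`, and this derivative is
strictly positive for all `v > 0`; hence the lognormal-fading reverse Myerson auction is
regular. -/
theorem stmt_4 (σf C : ℝ) (hσ : 0 < σf) (hC : 0 < C)
    (F f c : ℝ → ℝ)
    (hF : ∀ v : ℝ, 0 < v → F v = 1 - stdNormCDF (Real.log (C / v) / σf))
    (hf : ∀ v : ℝ, 0 < v →
      f v = (C / v) / (C * σf * Real.sqrt (2 * Real.pi)) *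
        Real.exp (-(Real.log (C / v)) ^ 2 / (2 * σf ^ 2)))
    (hc : ∀ v : ℝ, 0 < v → c v = v + F v / f v) :
    ∀ v : ℝ, 0 < v →
      HasDerivAt c
        (2 + (1 - stdNormCDF (Real.log (C / v) / σf)) / stdNormPDF (Real.log (C / v) / σf) *
          (σf - Real.log (C / v) / σf)) v ∧
      0 < 2 + (1 - stdNormCDF (Real.log (C / v) / σf)) / stdNormPDF (Real.log (C / v) / σf) *
          (σf - Real.log (C / v) / σf) := by
  intro v hv
  have hsqrt : 0 < Real.sqrt (2 * Real.pi) :=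
    Real.sqrt_pos.2 (by positivity)
  set γ : ℝ → ℝ := fun w => Real.log (C / w) / σf with hγdef
  -- f equals stdNormPDF (γ w) / (w * σf) for w > 0
  have hf' : ∀ w : ℝ, 0 < w → f w = stdNormPDF (γ w) / (w * σf) := by
    intro w hw
    rw [hf w hw, stdNormPDF_eq]
    simp only [hγdef]
    rw [div_pow, show -(Real.log (C / w) ^ 2 / σf ^ 2) / 2
        = -Real.log (C / w) ^ 2 / (2 * σf ^ 2) by rw [neg_div, neg_div, div_div, mul_comm]]
    field_simp
    all_goals first | tauto | ring
  -- the explicit function g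
  set g : ℝ → ℝ := fun w => w + (1 - stdNormCDF (γ w)) * (w * σf) / stdNormPDF (γ w) with hgdef
  have hcg : c =ᶠ[nhds v] g := by
    filter_upwards [Ioi_mem_nhds hv] with w hw
    have hw' : (0:ℝ) < w := hw
    rw [hc w hw', hF w hw', hf' w hw', hgdef]
    simp only
    rw [div_div_eq_mul_div]
  -- derivative of γ
  have hlog : HasDerivAt (fun w : ℝ => Real.log (C / w)) (-(1 / v)) v := by
    have h1 : HasDerivAt (fun w : ℝ => Real.log C - Real.log w) (-(1 / v)) v := by
      exact ((hasDerivAt_const v (Real.log C)).sub (Real.hasDerivAt_log hv.ne')).congr_deriv (by ring)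
    apply h1.congr_of_eventuallyEq
    filter_upwards [Ioi_mem_nhds hv] with w hw
    exact Real.log_div hC.ne' (ne_of_gt hw)
  have hγd : HasDerivAt γ (-(1 / (v * σf))) v := by
    have := hlog.div_const σf
    exact this.congr_deriv (by ring)
  have hΦ : HasDerivAt (fun w => stdNormCDF (γ w))
      (stdNormPDF (γ v) * -(1 / (v * σf))) v :=
    (hasDerivAt_stdNormCDF (γ v)).comp v hγd
  have hφ : HasDerivAt (fun w => stdNormPDF (γ w))
      ((-(γ v) * stdNormPDF (γ v)) * -(1 / (v * σf))) v :=
    (hasDerivAt_stdNormPDF (γ v)).comp v hγd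
  have hN : HasDerivAt (fun w => (1 - stdNormCDF (γ w)) * (w * σf))
      ((0 - stdNormPDF (γ v) * -(1 / (v * σf))) * (v * σf)
        + (1 - stdNormCDF (γ v)) * (1 * σf)) v := by
    exact ((hasDerivAt_const v (1:ℝ)).sub hΦ).mul ((hasDerivAt_id v).mul_const σf)
  have hP := stdNormPDF_pos (γ v)
  have hg : HasDerivAt g
      (2 + (1 - stdNormCDF (γ v)) / stdNormPDF (γ v) * (σf - γ v)) v := by
    have hdiv := hN.div hφ hP.ne'
    have := (hasDerivAt_id v).add hdiv
    refine this.congr_deriv ?_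
    rw [hγdef]
    simp only [id_eq]
    field_simp [show stdNormPDF (Real.log (C / v) / σf) ≠ 0 from hP.ne']
    ring
  refine ⟨hg.congr_of_eventuallyEq hcg, ?_⟩
  -- positivity
  have h1S := one_sub_stdNormCDF_pos (γ v)
  rcases le_or_gt (γ v) σf with h | h
  · have h0 : 0 ≤ (1 - stdNormCDF (γ v)) / stdNormPDF (γ v) * (σf - γ v) :=
      mul_nonneg (div_nonneg h1S.le hP.le) (by linarith)
    have : γ v = Real.log (C / v) / σf := rfl
    rw [← this]
    linarith
  · have hγpos : 0 < γ v := lt_trans hσ h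
    have hm := mills (γ v) hγpos
    have hR : (1 - stdNormCDF (γ v)) / stdNormPDF (γ v) ≤ 1 / γ v := by
      rw [div_le_div_iff₀ hP hγpos]
      have := (le_div_iff₀ hγpos).1 (hm.trans_eq rfl)
      nlinarith
    have h2 : (1 - stdNormCDF (γ v)) / stdNormPDF (γ v) * (γ v - σf) ≤ (γ v - σf) / γ v := by
      have := mul_le_mul_of_nonneg_right hR (by linarith : (0:ℝ) ≤ γ v - σf)
      calc (1 - stdNormCDF (γ v)) / stdNormPDF (γ v) * (γ v - σf) ≤ 1 / γ v * (γ v - σf) := this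
        _ = (γ v - σf) / γ v := by ring
    have h3 : (γ v - σf) / γ v < 1 := (div_lt_one hγpos).2 (by linarith)
    have h4 : (1 - stdNormCDF (γ v)) / stdNormPDF (γ v) * (σf - γ v)
        = -((1 - stdNormCDF (γ v)) / stdNormPDF (γ v) * (γ v - σf)) := by ring
    have : γ v = Real.log (C / v) / σf := rfl
    rw [← this]
    linarith
end

section
/- Under the Myerson reverse auction with regular, strictly increasing virtual valuations c_i, if a candidate ρ ≠ 0 wins (i.e., c_ρ(v_ρ) < min over others including c₀(v₀) = v₀), then the payment ω = sup{s : c_ρ(s) < min_{i≠ρ} c_i(v_i)} satisfies v_ρ ≤ ω and c_ρ(ω) ≤ v₀; in particular if v₀ ≤ P_max then ω ≤ P_max (since c_ρ(ω) ≥ ω), so a winning candidate is always paid a feasible amount. -/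
open Set

/-! The payment set `S = {s | c ρ s < c i (v i) for all i ≠ ρ}` contains `v ρ` because `ρ` wins, and
every `s ∈ S` satisfies `c ρ s < c 0 (v 0) = v 0`. Since `c ρ w ≥ w` for `w ≥ 0`, this bounds `S`
above, and as `sSup S` lies in the closure of `S`, continuity of `c ρ` gives `c ρ (sSup S) ≤ v 0`. -/

theorem Continuous.map_csSup_le {α β : Type*} [ConditionallyCompleteLinearOrder α]
    [TopologicalSpace α] [OrderTopology α] [TopologicalSpace β] [Preorder β]
    [OrderClosedTopology β] {f : α → β} (hf : Continuous f) {S : Set α} (hne : S.Nonempty)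
    (hbdd : BddAbove S) {b : β} (h : ∀ s ∈ S, f s ≤ b) : f (sSup S) ≤ b :=
  closure_minimal h (isClosed_le hf continuous_const) (csSup_mem_closure hne hbdd)

theorem bddAbove_of_forall_map_le {g : ℝ → ℝ} (hg : ∀ w, 0 ≤ w → w ≤ g w) {S : Set ℝ} {b : ℝ}
    (h : ∀ s ∈ S, g s ≤ b) : BddAbove S := by
  refine ⟨max 0 b, fun s hs => ?_⟩
  rcases le_or_gt 0 s with hs0 | hs0
  · exact ((hg s hs0).trans (h s hs)).trans (le_max_right 0 b)
  · exact hs0.le.trans (le_max_left 0 b)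

theorem stmt_11_general (n : ℕ) (c : Fin (n + 1) → ℝ → ℝ) (v : Fin (n + 1) → ℝ)
    (hvnonneg : ∀ i, 0 ≤ v i)
    (hcont : ∀ i, Continuous (c i))
    (hge : ∀ i, ∀ w : ℝ, 0 ≤ w → w ≤ c i w)
    (hc0 : ∀ w : ℝ, c 0 w = w)
    (ρ : Fin (n + 1)) (hρ : ρ ≠ 0)
    (hwin : ∀ i, i ≠ ρ → c ρ (v ρ) < c i (v i))
    (Pmax : ℝ) :
    v ρ ≤ sSup {s : ℝ | ∀ i, i ≠ ρ → c ρ s < c i (v i)} ∧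
    c ρ (sSup {s : ℝ | ∀ i, i ≠ ρ → c ρ s < c i (v i)}) ≤ v 0 ∧
    (v 0 ≤ Pmax → sSup {s : ℝ | ∀ i, i ≠ ρ → c ρ s < c i (v i)} ≤ Pmax) := by
  set S : Set ℝ := {s : ℝ | ∀ i, i ≠ ρ → c ρ s < c i (v i)}
  have hmem : v ρ ∈ S := hwin
  have hle : ∀ s ∈ S, c ρ s ≤ v 0 := fun s hs => by
    simpa only [hc0] using (hs 0 hρ.symm).le
  have hbdd : BddAbove S := bddAbove_of_forall_map_le (hge ρ) hle
  have hvω : v ρ ≤ sSup S := le_csSup hbdd hmem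
  have hcω : c ρ (sSup S) ≤ v 0 := (hcont ρ).map_csSup_le ⟨v ρ, hmem⟩ hbdd hle
  exact ⟨hvω, hcω, fun hP => (hge ρ _ ((hvnonneg ρ).trans hvω)).trans (hcω.trans hP)⟩

/-- Regular reverse Myerson auction with participants `0, 1, …, n`,
valuations `v i ≥ 0`, and virtual valuations `c i` that are continuous, strictly
increasing, and satisfy `c i w ≥ w` for `w ≥ 0`, with `c 0 = id` (so `c 0 (v 0) = v 0`).
If a candidate `ρ ≠ 0` wins, i.e. `c ρ (v ρ) < c i (v i)` for all `i ≠ ρ`, then the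
Myerson payment `ω = sup{s : c ρ s < min_{i ≠ ρ} c i (v i)}` satisfies `v ρ ≤ ω` and
`c ρ ω ≤ v 0`; in particular, if `v 0 ≤ P_max` then `ω ≤ P_max`, so a winning candidate
is always paid a feasible amount. -/
theorem stmt_11 (n : ℕ) (c : Fin (n + 1) → ℝ → ℝ) (v : Fin (n + 1) → ℝ)
    (hvnonneg : ∀ i, 0 ≤ v i)
    (hcont : ∀ i, Continuous (c i)) (hmono : ∀ i, StrictMono (c i))
    (hge : ∀ i, ∀ w : ℝ, 0 ≤ w → w ≤ c i w)
    (hc0 : ∀ w : ℝ, c 0 w = w)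
    (ρ : Fin (n + 1)) (hρ : ρ ≠ 0)
    (hwin : ∀ i, i ≠ ρ → c ρ (v ρ) < c i (v i))
    (Pmax : ℝ) :
    v ρ ≤ sSup {s : ℝ | ∀ i, i ≠ ρ → c ρ s < c i (v i)} ∧
    c ρ (sSup {s : ℝ | ∀ i, i ≠ ρ → c ρ s < c i (v i)}) ≤ v 0 ∧
    (v 0 ≤ Pmax → sSup {s : ℝ | ∀ i, i ≠ ρ → c ρ s < c i (v i)} ≤ Pmax) :=
  stmt_11_general n c v hvnonneg hcont hge hc0 ρ hρ hwin Pmax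
end
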